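/- Let Σ₀ be a real symmetric positive definite n×n matrix with smallest eigenvalue λmin > 0, and let B be a real symmetric positive semidefinite n×n matrix with ‖B‖₂ < 1/2 and tr(B) > 0. Set Δ := Σ₀^{1/2} B Σ₀^{1/2}, where Σ₀^{1/2} is the unique symmetric positive definite square root of Σ₀. Then tr(Δ) ≥ λmin · tr(B) > 0, and the Taylor remainder R := −(1/2) log det(I − B) − (1/2) tr(B) satisfies |R| / tr(Δ) ≤ ‖B‖₂ / (2 λmin). -/

import Mathlib

open Matrix

/-- The spectral norm (largest singular value) of a real square matrix,
realized as the operator norm of the induced map on Euclidean space. -/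
noncomputable def specNorm {n : ℕ} (B : Matrix (Fin n) (Fin n) ℝ) : ℝ :=
  ‖(Matrix.toEuclideanLin B).toContinuousLinearMap‖

/-- The square root of a positive semidefinite matrix, as `Matrix.PosSemidef.sqrt`
was defined in the older Mathlib. -/
noncomputable def posSemidefSqrt {n : ℕ} {A : Matrix (Fin n) (Fin n) ℝ} (hA : A.PosSemidef) :
    Matrix (Fin n) (Fin n) ℝ :=
  hA.1.eigenvectorUnitary.1 * diagonal ((↑) ∘ (√·) ∘ hA.1.eigenvalues) *
    (star hA.1.eigenvectorUnitary : Matrix (Fin n) (Fin n) ℝ)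

/-!
Diagonalising `B`, the remainder is `½ ∑ᵢ (-log (1 - μᵢ) - μᵢ)` over the eigenvalues
`0 ≤ μᵢ ≤ ‖B‖₂ ≤ 1/2`, and each term is at most `μᵢ² ≤ ‖B‖₂ μᵢ` because
`-log (1 - x) - x = ∑_{k ≥ 2} xᵏ/k ≤ x² / (2 (1 - x))`. Hence `0 ≤ R ≤ ½ ‖B‖₂ tr B`.
On the other side `tr Δ = tr (Σ₀ B) ≥ λmin tr B`, as is seen in an eigenbasis of `Σ₀`, where
`tr (Σ₀ B)` is a combination of the nonnegative diagonal entries of `B` with weights `≥ λmin`.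
-/

lemma Real.neg_log_one_sub_sub_le_sq {x : ℝ} (hx₀ : 0 ≤ x) (hx : x ≤ 1 / 2) :
    -Real.log (1 - x) - x ≤ x ^ 2 := by
  have hseries := Real.hasSum_pow_div_log_of_abs_lt_one (by rw [abs_of_nonneg hx₀]; linarith)
  have htail : HasSum (fun k : ℕ => x ^ (k + 2) / (k + 2)) (-Real.log (1 - x) - x) := by
    simpa [add_assoc, one_add_one_eq_two] using (hasSum_nat_add_iff' 1).mpr hseries
  have hgeom : HasSum (fun k : ℕ => x ^ 2 / 2 * x ^ k) (x ^ 2 / 2 * (1 - x)⁻¹) :=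
    (hasSum_geometric_of_lt_one hx₀ (by linarith)).mul_left _
  calc -Real.log (1 - x) - x ≤ x ^ 2 / 2 * (1 - x)⁻¹ := by
        refine hasSum_le (fun k => ?_) htail hgeom
        rw [pow_add, div_mul_eq_mul_div, mul_comm (x ^ k)]
        exact div_le_div_of_nonneg_left (by positivity) two_pos
          (by linarith [k.cast_nonneg (α := ℝ)])
    _ ≤ x ^ 2 := by
        rw [← div_eq_mul_inv, div_le_iff₀ (by linarith)]
        nlinarith [sq_nonneg x]

namespace Matrix

lemma IsHermitian.det_cfc {n : Type*} [Fintype n] [DecidableEq n] {A : Matrix n n ℝ}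
    (hA : A.IsHermitian) (f : ℝ → ℝ) : (cfc f A).det = ∏ i, f (hA.eigenvalues i) := by
  simp [hA.cfc_eq, IsHermitian.cfc, -Unitary.conjStarAlgAut_apply]

lemma IsHermitian.det_one_sub {n : Type*} [Fintype n] [DecidableEq n] {A : Matrix n n ℝ}
    (hA : A.IsHermitian) : (1 - A).det = ∏ i, (1 - hA.eigenvalues i) := by
  rw [← hA.det_cfc, cfc_sub (fun _ => (1 : ℝ)) (fun x => x) A, cfc_const_one ℝ A, cfc_id' ℝ A]

lemma IsHermitian.mul_trace_le_trace_mul {n : Type*} [Fintype n] [DecidableEq n]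
    {A B : Matrix n n ℝ} (hA : A.IsHermitian) (hB : B.PosSemidef) {c : ℝ}
    (hc : ∀ i, c ≤ hA.eigenvalues i) : c * B.trace ≤ (A * B).trace := by
  set U : Matrix n n ℝ := (hA.eigenvectorUnitary : Matrix n n ℝ)
  have hU : U * star U = 1 := Unitary.coe_mul_star_self _
  set C := star U * B * U
  have hC : C.PosSemidef := by
    simpa [C, star_eq_conjTranspose] using hB.conjTranspose_mul_mul_same U
  have htrB : B.trace = C.trace := by
    rw [trace_mul_cycle, hU, Matrix.one_mul]
  have htrAB : (A * B).trace = ∑ i, hA.eigenvalues i * C i i := by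
    conv_lhs => rw [hA.spectral_theorem, Unitary.conjStarAlgAut_apply]
    rw [Matrix.mul_assoc, Matrix.mul_assoc, trace_mul_comm, Matrix.mul_assoc]
    simp [trace, diagonal_mul, C, U]
  rw [htrB, trace, Finset.mul_sum, htrAB]
  exact Finset.sum_le_sum fun i _ => mul_le_mul_of_nonneg_right (hc i) hC.diag_nonneg

end Matrix

open scoped Matrix.Norms.L2Operator in
lemma abs_eigenvalues_le_specNorm {n : ℕ} {B : Matrix (Fin n) (Fin n) ℝ} (hB : B.IsHermitian)
    (i : Fin n) : |hB.eigenvalues i| ≤ specNorm B :=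
  have : Nonempty (Fin n) := ⟨i⟩
  spectrum.norm_le_norm_of_mem (hB.eigenvalues_mem_spectrum_real i)

lemma posSemidefSqrt_mul_self {n : ℕ} {A : Matrix (Fin n) (Fin n) ℝ} (hA : A.PosSemidef) :
    posSemidefSqrt hA * posSemidefSqrt hA = A := by
  have hsqrt : posSemidefSqrt hA = cfc Real.sqrt A := by rw [hA.1.cfc_eq]; rfl
  rw [hsqrt, ← cfc_mul Real.sqrt Real.sqrt A]
  conv_rhs => rw [← cfc_id' ℝ A hA.1]
  refine cfc_congr fun x hx => Real.mul_self_sqrt ?_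
  obtain ⟨i, rfl⟩ := hA.1.spectrum_real_eq_range_eigenvalues ▸ hx
  exact hA.eigenvalues_nonneg i

lemma abs_log_det_one_sub_remainder_le {n : ℕ} {B : Matrix (Fin n) (Fin n) ℝ}
    (hB : B.PosSemidef) (hBnorm : specNorm B ≤ 1 / 2) :
    |(-(1 / 2)) * Real.log (1 - B).det - (1 / 2) * B.trace| ≤ specNorm B * B.trace / 2 := by
  set μ := hB.1.eigenvalues
  have hμ₀ : ∀ i, 0 ≤ μ i := hB.eigenvalues_nonneg
  have hμ : ∀ i, μ i ≤ specNorm B := fun i => le_of_abs_le (abs_eigenvalues_le_specNorm hB.1 i)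
  have htr : B.trace = ∑ i, μ i := by simpa using hB.1.trace_eq_sum_eigenvalues
  have hterm_nonneg : ∀ i, 0 ≤ -Real.log (1 - μ i) - μ i := fun i => by
    linarith [Real.log_le_sub_one_of_pos (by linarith [hμ i] : 0 < 1 - μ i)]
  have hterm_le : ∀ i, -Real.log (1 - μ i) - μ i ≤ specNorm B * μ i := fun i =>
    calc -Real.log (1 - μ i) - μ i ≤ μ i ^ 2 :=
          Real.neg_log_one_sub_sub_le_sq (hμ₀ i) ((hμ i).trans hBnorm)
      _ ≤ specNorm B * μ i := by rw [sq]; exact mul_le_mul_of_nonneg_right (hμ i) (hμ₀ i)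
  have hR : (-(1 / 2)) * Real.log (1 - B).det - (1 / 2) * B.trace
      = (∑ i, (-Real.log (1 - μ i) - μ i)) / 2 := by
    rw [hB.1.det_one_sub, Real.log_prod fun i _ => by linarith [hμ i], htr,
      Finset.sum_sub_distrib, Finset.sum_neg_distrib]
    ring
  rw [hR, abs_of_nonneg (div_nonneg (Finset.sum_nonneg fun i _ => hterm_nonneg i) zero_le_two),
    htr, Finset.mul_sum]
  gcongr with i
  exact hterm_le i

/-- Composite remainder estimate from the proof of Theorem 1: for a symmetric
positive definite `Σ₀` with smallest eigenvalue `λmin > 0` and a symmetric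
positive semidefinite `B` with `‖B‖₂ < 1/2` and `tr(B) > 0`, setting
`Δ = Σ₀^{1/2} B Σ₀^{1/2}`, one has `tr(Δ) ≥ λmin · tr(B) > 0` and the Taylor
remainder `R = −½ log det(I − B) − ½ tr(B)` satisfies
`|R| / tr(Δ) ≤ ‖B‖₂ / (2 λmin)`. -/
theorem mi_taylor_remainder_over_trace_bound
    {n : ℕ}
    (S0 : Matrix (Fin n) (Fin n) ℝ) (hS0 : S0.PosDef)
    (lmin : ℝ) (hlmin : 0 < lmin)
    (hmin : lmin = ⨅ i, hS0.isHermitian.eigenvalues i)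
    (B : Matrix (Fin n) (Fin n) ℝ) (hB : B.PosSemidef)
    (hBnorm : specNorm B < 1 / 2) (hBtr : 0 < B.trace)
    (Δ : Matrix (Fin n) (Fin n) ℝ)
    (hΔ : Δ = posSemidefSqrt hS0.posSemidef * B * posSemidefSqrt hS0.posSemidef) :
    lmin * B.trace ≤ Δ.trace ∧ 0 < Δ.trace ∧
    |(-(1 / 2)) * Real.log ((1 : Matrix (Fin n) (Fin n) ℝ) - B).det
        - (1 / 2) * B.trace| / Δ.trace
      ≤ specNorm B / (2 * lmin) := by
  have hΔtr : lmin * B.trace ≤ Δ.trace := by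
    rw [hΔ, trace_mul_cycle, posSemidefSqrt_mul_self]
    exact hS0.isHermitian.mul_trace_le_trace_mul hB fun i =>
      hmin ▸ ciInf_le (Finite.bddBelow_range _) i
  have hΔpos : 0 < Δ.trace := (mul_pos hlmin hBtr).trans_le hΔtr
  refine ⟨hΔtr, hΔpos, ?_⟩
  have hR := abs_log_det_one_sub_remainder_le hB hBnorm.le
  calc _ ≤ specNorm B * B.trace / 2 / (lmin * B.trace) :=
        div_le_div₀ ((abs_nonneg _).trans hR) hR (mul_pos hlmin hBtr) hΔtr
    _ = specNorm B / (2 * lmin) := by field_simp
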